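/- Let d ≥ 1, let s > d be real, and let Λ be a lattice in ℝ^d with co-volume 1. Define the minimal classical periodic Riesz s-energy ℰ^{cp}_{s,Λ}(N) = inf over (x_1,…,x_N) ∈ (ℝ^d)^N of Σ_{j≠k} ζ_Λ(s; x_j−x_k). Then limsup_{N→∞} ℰ^{cp}_{s,Λ}(N)/N^{1+s/d} ≤ ζ_Λ(s). -/

import Mathlib

open scoped Real BigOperators
open MeasureTheory Filter

noncomputable section

/-- The lattice point `A k` for an integer vector `k : ℤ^d`. -/
def latPt {d : ℕ} (A : Matrix (Fin d) (Fin d) ℝ) (k : Fin d → ℤ) :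
    EuclideanSpace ℝ (Fin d) :=
  (WithLp.equiv 2 (Fin d → ℝ)).symm (A.mulVec fun i => (k i : ℝ))

/-- The lattice `Λ = A ℤ^d` as a subset of `ℝ^d`. -/
def latticeSet {d : ℕ} (A : Matrix (Fin d) (Fin d) ℝ) : Set (EuclideanSpace ℝ (Fin d)) :=
  Set.range (latPt A)

/-- The co-volume `|Λ| = |det A|`. -/
def covol {d : ℕ} (A : Matrix (Fin d) (Fin d) ℝ) : ℝ := |A.det|

/-- Generating matrix `(Aᵀ)⁻¹` of the dual lattice `Λ*`. -/
def dualMat {d : ℕ} (A : Matrix (Fin d) (Fin d) ℝ) : Matrix (Fin d) (Fin d) ℝ :=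
  A.transpose⁻¹

/-- The fundamental domain `Ω_Λ = {A t : t ∈ [0,1)^d}`. -/
def fundDomain {d : ℕ} (A : Matrix (Fin d) (Fin d) ℝ) : Set (EuclideanSpace ℝ (Fin d)) :=
  {x | ∃ t : Fin d → ℝ, (∀ i, 0 ≤ t i ∧ t i < 1) ∧
    x = (WithLp.equiv 2 (Fin d → ℝ)).symm (A.mulVec t)}

/-- The periodic Riesz `s`-potential `F_{s,Λ}(x)` (complex parameter `s`). -/
def rieszF {d : ℕ} (A : Matrix (Fin d) (Fin d) ℝ) (s : ℂ)
    (x : EuclideanSpace ℝ (Fin d)) : ℂ :=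
  (∑' k : Fin d → ℤ, ∫ t in Set.Ioi (1:ℝ),
      (Real.exp (-‖x + latPt A k‖ ^ 2 * t) : ℂ) * (t : ℂ) ^ (s / 2 - 1) /
        Complex.Gamma (s / 2))
  + (covol A : ℂ)⁻¹ * ∑' w : {k : Fin d → ℤ // k ≠ 0},
      Complex.exp (2 * Real.pi * Complex.I *
          ((inner ℝ (latPt (dualMat A) w.1) x : ℝ) : ℂ)) *
      ∫ t in Set.Ioo (0:ℝ) 1, (Real.pi : ℂ) ^ ((d : ℂ) / 2) *
        (t : ℂ) ^ ((s - d) / 2 - 1) *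
        (Real.exp (-(Real.pi ^ 2 * ‖latPt (dualMat A) w.1‖ ^ 2) / t) : ℂ) /
        Complex.Gamma (s / 2)

/-- The periodic Riesz `s`-energy of a configuration (for real `s`); the potential
`F_{s,Λ}` is real-valued, so we take the real part of the complex formula. -/
def rieszEnergy {d : ℕ} (A : Matrix (Fin d) (Fin d) ℝ) (s : ℝ) {N : ℕ}
    (ω : Fin N → EuclideanSpace ℝ (Fin d)) : ℝ :=
  ∑ j : Fin N, ∑ k : Fin N, if j ≠ k then (rieszF A (s : ℂ) (ω j - ω k)).re else 0

/-- The minimal `N`-point periodic Riesz `s`-energy `ℰ_{s,Λ}(N)`.  (Configurations with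
two points coinciding modulo `Λ` have infinite energy, so the infimum is taken over
configurations whose points are distinct modulo `Λ`.) -/
def minRieszEnergy {d : ℕ} (A : Matrix (Fin d) (Fin d) ℝ) (s : ℝ) (N : ℕ) : ℝ :=
  sInf {E : ℝ | ∃ ω : Fin N → EuclideanSpace ℝ (Fin d),
    (∀ j k : Fin N, j ≠ k → ω j - ω k ∉ latticeSet A) ∧ E = rieszEnergy A s ω}

/-- The periodic logarithmic potential `F_{log,Λ}(x)`. -/
def logF {d : ℕ} (A : Matrix (Fin d) (Fin d) ℝ) (x : EuclideanSpace ℝ (Fin d)) : ℝ :=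
  (∑' k : Fin d → ℤ, ∫ t in Set.Ioi (1:ℝ), Real.exp (-‖x + latPt A k‖ ^ 2 * t) / t)
  + (covol A)⁻¹ * (∑' w : {k : Fin d → ℤ // k ≠ 0},
      Complex.exp (2 * Real.pi * Complex.I *
          ((inner ℝ (latPt (dualMat A) w.1) x : ℝ) : ℂ)) *
      ((∫ t in Set.Ioo (0:ℝ) 1, Real.pi ^ ((d : ℝ) / 2) * t ^ (-(d : ℝ) / 2 - 1) *
          Real.exp (-(Real.pi ^ 2 * ‖latPt (dualMat A) w.1‖ ^ 2) / t) : ℝ) : ℂ)).re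

/-- The periodic logarithmic energy of a configuration. -/
def logEnergy {d : ℕ} (A : Matrix (Fin d) (Fin d) ℝ) {N : ℕ}
    (ω : Fin N → EuclideanSpace ℝ (Fin d)) : ℝ :=
  ∑ j : Fin N, ∑ k : Fin N, if j ≠ k then logF A (ω j - ω k) else 0

/-- The minimal `N`-point periodic logarithmic energy `ℰ_{log,Λ}(N)`. -/
def minLogEnergy {d : ℕ} (A : Matrix (Fin d) (Fin d) ℝ) (N : ℕ) : ℝ :=
  sInf {E : ℝ | ∃ ω : Fin N → EuclideanSpace ℝ (Fin d),
    (∀ j k : Fin N, j ≠ k → ω j - ω k ∉ latticeSet A) ∧ E = logEnergy A ω}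

/-- The Epstein zeta function `ζ_Λ(s) = Σ_{v ∈ Λ \ {0}} |v|^{-s}` (for real `s > d`). -/
def epsteinZeta {d : ℕ} (A : Matrix (Fin d) (Fin d) ℝ) (s : ℝ) : ℝ :=
  ∑' k : {k : Fin d → ℤ // k ≠ 0}, ‖latPt A k.1‖ ^ (-s)

/-- The Epstein–Hurwitz zeta function `ζ_Λ(s;x) = Σ_{v ∈ Λ} |x+v|^{-s}` (real `s > d`). -/
def epHurwitzZeta {d : ℕ} (A : Matrix (Fin d) (Fin d) ℝ) (s : ℝ)
    (x : EuclideanSpace ℝ (Fin d)) : ℝ :=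
  ∑' k : Fin d → ℤ, ‖x + latPt A k‖ ^ (-s)

/-- The analytic continuation `Z_Λ(s)` of the Epstein zeta function; the term
`-(2/Γ(s/2))·(1/s)` is written as `-1/Γ(s/2+1)`, which makes the apparent singularity
at `s = 0` removable. -/
def epsteinZ {d : ℕ} (A : Matrix (Fin d) (Fin d) ℝ) (s : ℂ) : ℂ :=
  4 * (Real.pi : ℂ) ^ ((d : ℂ) / 2) * (covol A : ℂ)⁻¹ /
      (Complex.Gamma (s / 2) * (s - d))
  - 1 / Complex.Gamma (s / 2 + 1)
  + ∑' k : {k : Fin d → ℤ // k ≠ 0}, ∫ t in Set.Ioi (1:ℝ),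
      (Real.exp (-‖latPt A k.1‖ ^ 2 * t) : ℂ) * (t : ℂ) ^ (s / 2 - 1) /
        Complex.Gamma (s / 2)
  + (covol A : ℂ)⁻¹ * ∑' w : {k : Fin d → ℤ // k ≠ 0}, ∫ t in Set.Ioo (0:ℝ) 1,
      (Real.pi : ℂ) ^ ((d : ℂ) / 2) * (t : ℂ) ^ ((s - d) / 2 - 1) *
      (Real.exp (-(Real.pi ^ 2 * ‖latPt (dualMat A) w.1‖ ^ 2) / t) : ℂ) /
        Complex.Gamma (s / 2)


/-- The classical periodic Riesz `s`-energy of a configuration. -/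
def cpEnergy {d : ℕ} (A : Matrix (Fin d) (Fin d) ℝ) (s : ℝ) {N : ℕ}
    (ω : Fin N → EuclideanSpace ℝ (Fin d)) : ℝ :=
  ∑ j : Fin N, ∑ k : Fin N, if j ≠ k then epHurwitzZeta A s (ω j - ω k) else 0

/-- The minimal `N`-point classical periodic Riesz `s`-energy `ℰ^{cp}_{s,Λ}(N)`
(the infimum is over configurations with points distinct modulo `Λ`, since the
energy of a degenerate configuration is `+∞`). -/
def minCpEnergy {d : ℕ} (A : Matrix (Fin d) (Fin d) ℝ) (s : ℝ) (N : ℕ) : ℝ :=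
  sInf {E : ℝ | ∃ ω : Fin N → EuclideanSpace ℝ (Fin d),
    (∀ j k : Fin N, j ≠ k → ω j - ω k ∉ latticeSet A) ∧ E = cpEnergy A s ω}

section AuxLemmas

lemma summable_pi_prod {g : ℤ → ℝ} (hg0 : ∀ k, 0 ≤ g k) (hg : Summable g) :
    ∀ m : ℕ, Summable fun u : Fin m → ℤ => ∏ i, g (u i) := by
  intro m
  induction m with
  | zero => exact Summable.of_finite
  | succ m IH =>
      have h := hg.mul_of_nonneg IH (fun k => hg0 k)
        (fun v => Finset.prod_nonneg fun i _ => hg0 _)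
      have he := (Fin.consEquiv fun _ : Fin (m+1) => ℤ).summable_iff
        (f := fun u : Fin (m+1) → ℤ => ∏ i, g (u i))
      rw [← he]
      convert h using 1
      funext p
      simp only [Function.comp, Fin.prod_univ_succ]
      simp [Fin.consEquiv]

lemma summable_g {p : ℝ} (hp : 1 < p) :
    Summable fun k : ℤ => (1 + |(k : ℝ)|) ^ (-p) := by
  have hnat : Summable fun n : ℕ => ((n : ℝ) + 1) ^ (-p) := by
    have := (summable_nat_add_iff (f := fun n : ℕ => (n : ℝ) ^ (-p)) 1).2
      (Real.summable_nat_rpow.2 (by linarith))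
    convert this using 2 with n
    · rfl
    push_cast; ring_nf
  apply Summable.of_nat_of_neg
  · convert hnat using 3 with n
    · rfl
    push_cast
    rw [abs_of_nonneg (Nat.cast_nonneg n)]; ring
  · convert hnat using 3 with n
    · rfl
    push_cast
    rw [abs_neg, abs_of_nonneg (Nat.cast_nonneg n)]; ring

-- sup-norm is below the euclidean norm
lemma pi_norm_le_euclid {d : ℕ} (w : Fin d → ℝ) :
    ‖w‖ ≤ ‖(WithLp.equiv 2 (Fin d → ℝ)).symm w‖ := by
  rw [pi_norm_le_iff_of_nonneg (norm_nonneg _)]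
  intro i
  have h1 : ‖w i‖ = Real.sqrt (‖w i‖ ^ 2) := by
    rw [Real.sqrt_sq (norm_nonneg _)]
  rw [h1, EuclideanSpace.norm_eq]
  apply Real.sqrt_le_sqrt
  have : (WithLp.equiv 2 (Fin d → ℝ)).symm w i = w i := rfl
  refine Finset.single_le_sum (f := fun j => ‖(WithLp.equiv 2 (Fin d → ℝ)).symm w j‖ ^ 2)
    (fun j _ => by positivity) (Finset.mem_univ i) |>.trans_eq' ?_
  rw [this]

lemma exists_norm_bound {d : ℕ} (A : Matrix (Fin d) (Fin d) ℝ) (hA : A.det ≠ 0) :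
    ∃ c : ℝ, 0 < c ∧ ∀ v : Fin d → ℝ,
      ‖v‖ ≤ c * ‖(WithLp.equiv 2 (Fin d → ℝ)).symm (A.mulVec v)‖ := by
  set T := LinearMap.toContinuousLinearMap (Matrix.mulVecLin A⁻¹) with hT
  refine ⟨‖T‖ + 1, by positivity, fun v => ?_⟩
  have h1 : A⁻¹.mulVec (A.mulVec v) = v := by
    rw [Matrix.mulVec_mulVec, Matrix.nonsing_inv_mul A (isUnit_iff_ne_zero.mpr hA), Matrix.one_mulVec]
  have h2 : ‖v‖ ≤ ‖T‖ * ‖A.mulVec v‖ := by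
    calc ‖v‖ = ‖T (A.mulVec v)‖ := by
          simp [hT, LinearMap.coe_toContinuousLinearMap', Matrix.mulVecLin_apply, h1]
      _ ≤ ‖T‖ * ‖A.mulVec v‖ := T.le_opNorm _
  have h3 := pi_norm_le_euclid (A.mulVec v)
  nlinarith [norm_nonneg (A.mulVec v), norm_nonneg T,
    norm_nonneg ((WithLp.equiv 2 (Fin d → ℝ)).symm (A.mulVec v))]

lemma latPt_zero {d : ℕ} (A : Matrix (Fin d) (Fin d) ℝ) : latPt A 0 = 0 := by
  have : (fun i : Fin d => ((0 : Fin d → ℤ) i : ℝ)) = (0 : Fin d → ℝ) := by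
    funext i; simp
  simp only [latPt, this, Matrix.mulVec_zero]
  rfl

lemma summable_lat {d : ℕ} (A : Matrix (Fin d) (Fin d) ℝ) (hA : A.det ≠ 0)
    (hd : 1 ≤ d) {s : ℝ} (hs : (d : ℝ) < s) :
    Summable fun u : Fin d → ℤ => ‖latPt A u‖ ^ (-s) := by
  obtain ⟨c, hc, hbound⟩ := exists_norm_bound A hA
  have hd0 : (0:ℝ) < d := by exact_mod_cast hd
  have hs0 : (0:ℝ) < s := lt_trans hd0 hs
  set p : ℝ := s / d with hp
  have hp1 : 1 < p := (one_lt_div hd0).2 hs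
  set g : ℤ → ℝ := fun k => (1 + |(k : ℝ)|) ^ (-p) with hgdef
  have hg0 : ∀ k, 0 ≤ g k := fun k => Real.rpow_nonneg (by positivity) _
  have hM : Summable fun u : Fin d → ℤ => c ^ s * 2 ^ s * ∏ i, g (u i) :=
    (summable_pi_prod hg0 (summable_g hp1) d).mul_left _
  refine Summable.of_nonneg_of_le (fun u => Real.rpow_nonneg (norm_nonneg _) _) ?_ hM
  intro u
  by_cases hu : u = 0
  · subst hu
    rw [latPt_zero, norm_zero, Real.zero_rpow (neg_ne_zero.mpr hs0.ne')]
    have hgnn : ∀ i : Fin d, 0 ≤ g ((0 : Fin d → ℤ) i) := fun i => hg0 _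
    positivity
  · set rv : Fin d → ℝ := fun i => (u i : ℝ) with hrv
    have hlow : ‖rv‖ ≤ c * ‖latPt A u‖ := hbound rv
    have hr1 : 1 ≤ ‖rv‖ := by
      obtain ⟨i, hi⟩ := Function.ne_iff.mp hu
      have h1 : (1:ℝ) ≤ ‖rv i‖ := by
        show (1:ℝ) ≤ ‖((u i : ℤ) : ℝ)‖
        rw [Real.norm_eq_abs]
        exact_mod_cast Int.one_le_abs hi
      exact h1.trans (norm_le_pi_norm rv i)
    have hrpos : 0 < ‖rv‖ := lt_of_lt_of_le one_pos hr1
    have hle : ‖rv‖ / c ≤ ‖latPt A u‖ := (div_le_iff₀ hc).2 (by linarith [hlow])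
    have hpos' : 0 < ‖rv‖ / c := by positivity
    have step1 : ‖latPt A u‖ ^ (-s) ≤ (‖rv‖ / c) ^ (-s) :=
      Real.rpow_le_rpow_of_nonpos hpos' hle (by linarith)
    have e1 : (‖rv‖ / c) ^ (-s) = c ^ s * ‖rv‖ ^ (-s) := by
      rw [Real.div_rpow (norm_nonneg _) hc.le, Real.rpow_neg hc.le s]
      field_simp
    have key : ∏ i, (1 + |(u i : ℝ)|) ≤ (2 * ‖rv‖) ^ (d:ℕ) := by
      calc ∏ i, (1 + |(u i : ℝ)|) ≤ ∏ _i : Fin d, (2 * ‖rv‖) := by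
            refine Finset.prod_le_prod (fun i _ => by positivity) (fun i _ => ?_)
            have h2 := norm_le_pi_norm rv i
            rw [Real.norm_eq_abs] at h2
            have : |(u i : ℝ)| ≤ ‖rv‖ := h2
            linarith
        _ = (2 * ‖rv‖) ^ (d:ℕ) := by
            rw [Finset.prod_const, Finset.card_univ, Fintype.card_fin]
    have h2r : (0:ℝ) < 2 * ‖rv‖ := by positivity
    have e2 : ‖rv‖ ^ (-s) = 2 ^ s * (2 * ‖rv‖) ^ (-s) := by
      rw [Real.mul_rpow (by norm_num : (0:ℝ) ≤ 2) (norm_nonneg _), ← mul_assoc,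
        ← Real.rpow_add two_pos]
      simp
    have e3 : (2 * ‖rv‖) ^ (-s) = ((2 * ‖rv‖) ^ (d:ℕ)) ^ (-p) := by
      rw [← Real.rpow_natCast (2 * ‖rv‖) d, ← Real.rpow_mul h2r.le]
      congr 1
      rw [hp]
      field_simp
    have e4 : ((2 * ‖rv‖) ^ (d:ℕ)) ^ (-p) ≤ (∏ i, (1 + |(u i : ℝ)|)) ^ (-p) :=
      Real.rpow_le_rpow_of_nonpos (Finset.prod_pos fun i _ => by positivity) key
        (by linarith)
    have e5 : (∏ i, (1 + |(u i : ℝ)|)) ^ (-p) = ∏ i, g (u i) :=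
      (Real.finset_prod_rpow _ _ (fun i _ => by positivity) _).symm
    calc ‖latPt A u‖ ^ (-s) ≤ c ^ s * ‖rv‖ ^ (-s) := e1 ▸ step1
      _ = c ^ s * (2 ^ s * (2 * ‖rv‖) ^ (-s)) := by rw [← e2]
      _ ≤ c ^ s * (2 ^ s * ∏ i, g (u i)) := by
          have h5 : (2 * ‖rv‖) ^ (-s) ≤ ∏ i, g (u i) := by
            rw [e3]; exact e5 ▸ e4
          have hcs : (0:ℝ) ≤ c ^ s := Real.rpow_nonneg hc.le _
          have h2s : (0:ℝ) ≤ 2 ^ s := Real.rpow_nonneg (by norm_num) _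
          exact mul_le_mul_of_nonneg_left (mul_le_mul_of_nonneg_left h5 h2s) hcs
      _ = c ^ s * 2 ^ s * ∏ i, g (u i) := by ring

lemma int_aux {n a b t : ℤ} (hn : 0 < n) (ha : 0 ≤ a) (ha' : a < n) (hb : 0 ≤ b)
    (hb' : b < n) (h : a - b = n * t) : a = b ∧ t = 0 := by
  have h1 : a - b < n := by omega
  have h2 : -n < a - b := by omega
  have ht1 : t < 1 := by nlinarith
  have ht2 : -1 < t := by nlinarith
  have ht : t = 0 := by omega
  subst ht
  constructor
  · omega
  · rfl

variable {d : ℕ} {A : Matrix (Fin d) (Fin d) ℝ} {s : ℝ}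

lemma cpEnergy_nonneg {N : ℕ} (ω : Fin N → EuclideanSpace ℝ (Fin d)) :
    0 ≤ cpEnergy A s ω := by
  refine Finset.sum_nonneg fun j _ => Finset.sum_nonneg fun k _ => ?_
  split
  · exact tsum_nonneg fun v => Real.rpow_nonneg (norm_nonneg _) _
  · exact le_refl 0

lemma epsteinZeta_eq_tsum (hA : A.det ≠ 0) (hd : 1 ≤ d) (hs : (d : ℝ) < s) :
    epsteinZeta A s = ∑' u : Fin d → ℤ, ‖latPt A u‖ ^ (-s) := by
  have hs0 : (0:ℝ) < s := lt_of_lt_of_le (by exact_mod_cast hd) hs.le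
  refine tsum_subtype_eq_of_support_subset
    (f := fun u : Fin d → ℤ => ‖latPt A u‖ ^ (-s)) (s := {k : Fin d → ℤ | k ≠ 0}) ?_
  intro u hu
  simp only [Function.mem_support] at hu
  simp only [Set.mem_setOf_eq]
  rintro rfl
  apply hu
  rw [latPt_zero, norm_zero, Real.zero_rpow (neg_ne_zero.mpr hs0.ne')]

lemma energy_bound (hA : A.det ≠ 0) (hd : 1 ≤ d) (hs : (d : ℝ) < s)
    {N n : ℕ} (hn : 0 < n) (hNn : N ≤ n ^ d) :
    minCpEnergy A s N ≤ (N : ℝ) * (n : ℝ) ^ s * epsteinZeta A s := by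
  have hs0 : (0:ℝ) < s := lt_of_lt_of_le (by exact_mod_cast hd) hs.le
  have hnR : (0:ℝ) < n := by exact_mod_cast hn
  set ι : Fin N → Fin d → ℤ :=
    fun j i => ((finFunctionFinEquiv.symm (Fin.castLE hNn j) i : ℕ) : ℤ) with hι
  have hι_inj : Function.Injective ι := by
    intro j j' h
    refine Fin.castLE_injective hNn (finFunctionFinEquiv.symm.injective (funext fun i => ?_))
    have := congrFun h i
    simp only [hι] at this
    exact Fin.ext (by exact_mod_cast this)
  have hι_bound : ∀ j i, 0 ≤ ι j i ∧ ι j i < n := by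
    intro j i
    simp only [hι]
    refine ⟨Int.ofNat_nonneg _, ?_⟩
    exact_mod_cast (finFunctionFinEquiv.symm (Fin.castLE hNn j) i).isLt
  set ω : Fin N → EuclideanSpace ℝ (Fin d) :=
    fun j => (WithLp.equiv 2 (Fin d → ℝ)).symm (A.mulVec fun i => (ι j i : ℝ) / n) with hω
  have hsub : ∀ j k, ω j - ω k =
      (WithLp.equiv 2 (Fin d → ℝ)).symm
        (A.mulVec fun i => ((ι j i - ι k i : ℤ) : ℝ) / n) := by
    intro j k
    simp only [hω]
    rw [WithLp.equiv_symm_apply, ← WithLp.toLp_sub, ← Matrix.mulVec_sub]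
    apply congrArg
    apply congrArg
    funext i
    simp only [Pi.sub_apply]
    push_cast
    ring
  have hAinj : ∀ v w : Fin d → ℝ, A.mulVec v = A.mulVec w → v = w := by
    intro v w h
    have h2 := congrArg (A⁻¹.mulVec) h
    rwa [Matrix.mulVec_mulVec, Matrix.mulVec_mulVec,
      Matrix.nonsing_inv_mul A (isUnit_iff_ne_zero.mpr hA), Matrix.one_mulVec,
      Matrix.one_mulVec] at h2
  have hvalid : ∀ j k, j ≠ k → ω j - ω k ∉ latticeSet A := by
    rintro j k hjk ⟨v, hv⟩
    rw [hsub j k] at hv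
    have h1 := hAinj _ _ ((WithLp.equiv 2 (Fin d → ℝ)).symm.injective hv)
    obtain ⟨i, hi⟩ : ∃ i, ι j i ≠ ι k i := by
      by_contra hcon
      push_neg at hcon
      exact hjk (hι_inj (funext hcon))
    have h2 := congrFun h1 i
    have hnne : (n : ℝ) ≠ 0 := hnR.ne'
    have hz : ι j i - ι k i = (n : ℤ) * v i := by
      have h3 : ((ι j i - ι k i : ℤ) : ℝ) = (n : ℝ) * (v i : ℝ) := by
        rw [h2]
        field_simp
      exact_mod_cast h3
    obtain ⟨hc1, -⟩ := int_aux (by exact_mod_cast hn) (hι_bound j i).1 (hι_bound j i).2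
      (hι_bound k i).1 (hι_bound k i).2 hz
    exact hi hc1
  have hHur : ∀ j k : Fin N, epHurwitzZeta A s (ω j - ω k) =
      (n : ℝ) ^ s *
        ∑' v : Fin d → ℤ, ‖latPt A (fun i => (ι j i - ι k i) + n * v i)‖ ^ (-s) := by
    intro j k
    rw [epHurwitzZeta, ← tsum_mul_left]
    apply tsum_congr
    intro v
    have hx : ω j - ω k + latPt A v =
        (WithLp.equiv 2 (Fin d → ℝ)).symm (A.mulVec ((n : ℝ)⁻¹ •
          fun i => (((ι j i - ι k i) + n * v i : ℤ) : ℝ))) := by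
      rw [hsub j k, latPt, WithLp.equiv_symm_apply, ← WithLp.toLp_add, ← Matrix.mulVec_add]
      apply congrArg
      apply congrArg
      funext i
      simp only [Pi.add_apply, Pi.smul_apply, smul_eq_mul]
      push_cast
      field_simp
    rw [hx, Matrix.mulVec_smul, WithLp.equiv_symm_apply, WithLp.toLp_smul, norm_smul, Real.norm_eq_abs,
      abs_inv, abs_of_pos hnR,
      Real.mul_rpow (by positivity) (norm_nonneg _), Real.inv_rpow hnR.le,
      Real.rpow_neg hnR.le, inv_inv]
    rfl
  have hrow : ∀ j : Fin N,
      (∑ k : Fin N, if j ≠ k then epHurwitzZeta A s (ω j - ω k) else 0)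
        ≤ (n : ℝ) ^ s * epsteinZeta A s := by
    intro j
    set g : (Fin d → ℤ) → ℝ := fun u => ‖latPt A u‖ ^ (-s) with hg
    set E : Fin N × (Fin d → ℤ) → (Fin d → ℤ) :=
      fun p => fun i => (ι j i - ι p.1 i) + n * p.2 i with hE
    have hE_inj : Function.Injective E := by
      rintro ⟨k, v⟩ ⟨k', v'⟩ h
      have key : ∀ i, ι k i = ι k' i ∧ v i = v' i := by
        intro i
        have hi := congrFun h i
        simp only [hE] at hi
        have hlin : ι k' i - ι k i = (n : ℤ) * (v' i - v i) := by linear_combination hi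
        obtain ⟨h1, h2⟩ := int_aux (by exact_mod_cast hn) (hι_bound k' i).1
          (hι_bound k' i).2 (hι_bound k i).1 (hι_bound k i).2 hlin
        exact ⟨h1.symm, by omega⟩
      have hk : k = k' := hι_inj (funext fun i => (key i).1)
      have hv : v = v' := funext fun i => (key i).2
      rw [hk, hv]
    set F : Fin N × (Fin d → ℤ) → ℝ := fun p => if j ≠ p.1 then g (E p) else 0 with hF
    have hgE : Summable (g ∘ E) := (summable_lat A hA hd hs).comp_injective hE_inj
    have hg_nonneg : ∀ u, 0 ≤ g u := fun u => Real.rpow_nonneg (norm_nonneg _) _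
    have hF_nonneg : ∀ p, 0 ≤ F p := by
      intro p
      simp only [hF]
      split
      · exact hg_nonneg _
      · exact le_refl 0
    have hF_le : ∀ p, F p ≤ g (E p) := by
      intro p
      simp only [hF]
      split
      · exact le_refl _
      · exact hg_nonneg _
    have hFs : Summable F := Summable.of_nonneg_of_le hF_nonneg hF_le hgE
    have hrow_eq : (∑ k : Fin N, if j ≠ k then epHurwitzZeta A s (ω j - ω k) else 0)
        = (n : ℝ) ^ s * ∑' p : Fin N × (Fin d → ℤ), F p := by
      rw [hFs.tsum_prod' hFs.prod_factor, tsum_fintype, Finset.mul_sum]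
      apply Finset.sum_congr rfl
      intro k _
      by_cases hjk : j ≠ k
      · rw [if_pos hjk, hHur j k]
        congr 1
        apply tsum_congr
        intro v
        simp only [hF, hE, hg]
        rw [if_pos hjk]
      · rw [if_neg hjk]
        push_neg at hjk
        subst hjk
        simp [hF]
    have hζ : ∑' p, F p ≤ epsteinZeta A s := by
      rw [epsteinZeta_eq_tsum hA hd hs]
      refine Summable.tsum_le_tsum_of_inj E hE_inj (fun c _ => hg_nonneg c) hF_le hFs
        (summable_lat A hA hd hs)
    rw [hrow_eq]
    exact mul_le_mul_of_nonneg_left hζ (Real.rpow_nonneg hnR.le _)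
  have hmem : cpEnergy A s ω ∈ {E : ℝ | ∃ ω' : Fin N → EuclideanSpace ℝ (Fin d),
      (∀ j k : Fin N, j ≠ k → ω' j - ω' k ∉ latticeSet A) ∧ E = cpEnergy A s ω'} :=
    ⟨ω, hvalid, rfl⟩
  have hbdd : BddBelow {E : ℝ | ∃ ω' : Fin N → EuclideanSpace ℝ (Fin d),
      (∀ j k : Fin N, j ≠ k → ω' j - ω' k ∉ latticeSet A) ∧ E = cpEnergy A s ω'} := by
    refine ⟨0, ?_⟩
    rintro E ⟨ω', -, rfl⟩
    exact cpEnergy_nonneg ω'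
  calc minCpEnergy A s N ≤ cpEnergy A s ω := csInf_le hbdd hmem
    _ ≤ ∑ _j : Fin N, (n : ℝ) ^ s * epsteinZeta A s :=
        Finset.sum_le_sum fun j _ => hrow j
    _ = (N : ℝ) * (n : ℝ) ^ s * epsteinZeta A s := by
        rw [Finset.sum_const, Finset.card_univ, Fintype.card_fin, nsmul_eq_mul]
        ring

end AuxLemmas

theorem statement4 (d : ℕ) (hd : 1 ≤ d) (s : ℝ) (hs : (d : ℝ) < s)
    (A : Matrix (Fin d) (Fin d) ℝ) (hA : A.det ≠ 0) (hcov : covol A = 1) :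
    Filter.limsup (fun N : ℕ => minCpEnergy A s N / (N : ℝ) ^ (1 + s / (d : ℝ))) atTop ≤
      epsteinZeta A s := by
  have hd0 : (0:ℝ) < d := by exact_mod_cast hd
  have hdn : (d:ℝ) ≠ 0 := hd0.ne'
  have hζ0 : 0 ≤ epsteinZeta A s :=
    tsum_nonneg fun k => Real.rpow_nonneg (norm_nonneg _) _
  set ζ := epsteinZeta A s with hζ
  set nn : ℕ → ℕ := fun N => ⌈(N:ℝ) ^ ((d:ℝ)⁻¹)⌉₊ with hnn
  set g : ℕ → ℝ := fun N => ζ * ((nn N : ℝ) / (N:ℝ) ^ ((d:ℝ)⁻¹)) ^ s with hgdef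
  have hmin_nonneg : ∀ N : ℕ, 0 ≤ minCpEnergy A s N := by
    intro N
    apply Real.sInf_nonneg
    rintro E ⟨ω', -, rfl⟩
    exact cpEnergy_nonneg ω'
  have hfg : ∀ᶠ N : ℕ in atTop,
      minCpEnergy A s N / (N:ℝ) ^ (1 + s / (d:ℝ)) ≤ g N := by
    filter_upwards [eventually_ge_atTop 1] with N hN
    have hN0 : (0:ℝ) < N := by exact_mod_cast hN
    have hx1 : (1:ℝ) ≤ (N:ℝ) ^ ((d:ℝ)⁻¹) :=
      Real.one_le_rpow (by exact_mod_cast hN) (by positivity)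
    have hxpos : (0:ℝ) < (N:ℝ) ^ ((d:ℝ)⁻¹) := by positivity
    have hnpos : 0 < nn N := Nat.ceil_pos.mpr (lt_of_lt_of_le one_pos hx1)
    have hceil : (N:ℝ) ^ ((d:ℝ)⁻¹) ≤ (nn N : ℝ) := Nat.le_ceil _
    have hNle : N ≤ (nn N) ^ d := by
      have h1 : (N:ℝ) ≤ ((nn N : ℕ) : ℝ) ^ (d:ℕ) := by
        calc (N:ℝ) = ((N:ℝ) ^ ((d:ℝ)⁻¹)) ^ (d:ℕ) := by
              rw [← Real.rpow_natCast ((N:ℝ) ^ ((d:ℝ)⁻¹)) d, ← Real.rpow_mul hN0.le,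
                inv_mul_cancel₀ hdn, Real.rpow_one]
          _ ≤ ((nn N : ℕ) : ℝ) ^ (d:ℕ) := pow_le_pow_left₀ hxpos.le hceil d
      exact_mod_cast h1
    have hEb := energy_bound hA hd hs hnpos hNle
    have hkey : g N * (N:ℝ) ^ (1 + s / (d:ℝ)) = (N:ℝ) * ((nn N : ℕ):ℝ) ^ s * ζ := by
      rw [hgdef]
      simp only
      rw [Real.rpow_add hN0, Real.rpow_one,
        Real.div_rpow (Nat.cast_nonneg _) hxpos.le, ← Real.rpow_mul hN0.le]
      have he : (d:ℝ)⁻¹ * s = s / d := by ring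
      rw [he]
      have hns : (0:ℝ) < (N:ℝ) ^ (s / (d:ℝ)) := by positivity
      field_simp
    rw [div_le_iff₀ (by positivity)]
    rw [hkey]
    exact hEb
  have hratio : Tendsto (fun N : ℕ => (nn N : ℝ) / (N:ℝ) ^ ((d:ℝ)⁻¹)) atTop (nhds 1) := by
    have hup : Tendsto (fun N : ℕ => 1 + (N:ℝ) ^ (-(d:ℝ)⁻¹)) atTop (nhds 1) := by
      have h2 := (tendsto_rpow_neg_atTop (by positivity : (0:ℝ) < (d:ℝ)⁻¹)).comp
        (tendsto_natCast_atTop_atTop (R := ℝ))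
      have := tendsto_const_nhds (x := (1:ℝ)) (f := atTop (α := ℕ)) |>.add h2
      simpa using this
    refine tendsto_of_tendsto_of_tendsto_of_le_of_le' tendsto_const_nhds hup ?_ ?_
    · filter_upwards [eventually_ge_atTop 1] with N hN
      have hN0 : (0:ℝ) < N := by exact_mod_cast hN
      have hx1 : (1:ℝ) ≤ (N:ℝ) ^ ((d:ℝ)⁻¹) :=
        Real.one_le_rpow (by exact_mod_cast hN) (by positivity)
      have hxpos : (0:ℝ) < (N:ℝ) ^ ((d:ℝ)⁻¹) := by positivity
      rw [le_div_iff₀ hxpos, one_mul]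
      exact Nat.le_ceil _
    · filter_upwards [eventually_ge_atTop 1] with N hN
      have hN0 : (0:ℝ) < N := by exact_mod_cast hN
      have hxpos : (0:ℝ) < (N:ℝ) ^ ((d:ℝ)⁻¹) := by positivity
      have hceil : ((nn N : ℕ) : ℝ) ≤ (N:ℝ) ^ ((d:ℝ)⁻¹) + 1 :=
        (Nat.ceil_lt_add_one hxpos.le).le
      rw [div_le_iff₀ hxpos]
      rw [Real.rpow_neg hN0.le]
      calc ((nn N : ℕ) : ℝ) ≤ (N:ℝ) ^ ((d:ℝ)⁻¹) + 1 := hceil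
        _ = (1 + ((N:ℝ) ^ ((d:ℝ)⁻¹))⁻¹) * (N:ℝ) ^ ((d:ℝ)⁻¹) := by
            field_simp
    -- done
  have hg_tendsto : Tendsto g atTop (nhds ζ) := by
    have hcont : ContinuousAt (fun x : ℝ => x ^ s) 1 :=
      Real.continuousAt_rpow_const 1 s (Or.inl one_ne_zero)
    have h3 : Tendsto (fun N : ℕ => ((nn N : ℝ) / (N:ℝ) ^ ((d:ℝ)⁻¹)) ^ s) atTop
        (nhds ((1:ℝ) ^ s)) := hcont.tendsto.comp hratio
    rw [Real.one_rpow] at h3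
    have := h3.const_mul ζ
    simpa using this
  have hlim : limsup g atTop = ζ := hg_tendsto.limsup_eq
  refine le_trans (limsup_le_limsup hfg ?_ ?_) hlim.le
  · exact Filter.IsBoundedUnder.isCoboundedUnder_le
      (Filter.isBoundedUnder_of ⟨0, fun N =>
        div_nonneg (hmin_nonneg N) (Real.rpow_nonneg (Nat.cast_nonneg N) _)⟩)
  · exact hg_tendsto.isBoundedUnder_le


end
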